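/- arXiv:1607.06808 — 3 statements merged into one kernel-verified Lean document; each statement's English description precedes it below -/
import Mathlib

section
/- The number of 2m-step closed walks at the origin in the restricted two-dimensional lattice L{x ≥ y} equals C_m · C(2m,m) = C(2m,m)²/(m+1), where C_m is the m-th Catalan number; odd-step closed walk counts are 0. -/
/-!
In the coordinates `u = x - y`, `v = x + y` every lattice step changes both `u` and `v` by `±1`,
independently, and the half plane `x ≥ y` becomes `u ≥ 0`. So a closed walk at the origin of
`L{x ≥ y}` is the same as a pair of closed walks of equal length, one in the half-line `ℕ` and one
in `ℤ`: its walk count is the product of theirs. Closed walks of length `2m` in `ℕ` are Dyck words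
(`C_m` of them), those in `ℤ` are `±1` sequences with `m` up-steps (`C(2m, m)` of them), and `ℤ`
has no closed walks of odd length.
-/

/-- The one-dimensional integer lattice: `x ∼ y` iff `|x - y| = 1`. -/
def latZ : SimpleGraph ℤ where
  Adj x y := |x - y| = 1
  symm := ⟨by intro x y h; rwa [abs_sub_comm]⟩
  loopless := ⟨by intro x h; simp at h⟩

/-- The half-line graph on `ℕ = {0,1,2,...}`: `x ∼ y` iff `|x - y| = 1`. -/
def latN : SimpleGraph ℕ where
  Adj x y := |(x : ℤ) - y| = 1
  symm := ⟨by intro x y h; rwa [abs_sub_comm]⟩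
  loopless := ⟨by intro x h; simp at h⟩

/-- The number of `m`-step closed walks at `o` in `G`. -/
noncomputable def walkCount {V : Type*} (G : SimpleGraph V) (o : V) (m : ℕ) : ℕ :=
  Nat.card {w : G.Walk o o // w.length = m}

namespace SimpleGraph

section TensorProduct

variable {V W : Type*}

def tensorProd (G : SimpleGraph V) (H : SimpleGraph W) : SimpleGraph (V × W) where
  Adj p q := G.Adj p.1 q.1 ∧ H.Adj p.2 q.2
  symm := ⟨fun _ _ h => ⟨h.1.symm, h.2.symm⟩⟩
  loopless := ⟨fun _ h => h.1.ne rfl⟩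

infix:70 " ×ₜ " => tensorProd

variable {G : SimpleGraph V} {H : SimpleGraph W}

theorem tensorProd_adj {p q : V × W} : (G ×ₜ H).Adj p q ↔ G.Adj p.1 q.1 ∧ H.Adj p.2 q.2 :=
  Iff.rfl

namespace Walk

def tensorFst : ∀ {p q : V × W}, (G ×ₜ H).Walk p q → G.Walk p.1 q.1
  | _, _, .nil => .nil
  | _, _, .cons h w => .cons h.1 w.tensorFst

def tensorSnd : ∀ {p q : V × W}, (G ×ₜ H).Walk p q → H.Walk p.2 q.2
  | _, _, .nil => .nil
  | _, _, .cons h w => .cons h.2 w.tensorSnd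

@[simp]
theorem length_tensorFst : ∀ {p q : V × W} (w : (G ×ₜ H).Walk p q),
    w.tensorFst.length = w.length
  | _, _, .nil => rfl
  | _, _, .cons _ w => congrArg Nat.succ w.length_tensorFst

@[simp]
theorem length_tensorSnd : ∀ {p q : V × W} (w : (G ×ₜ H).Walk p q),
    w.tensorSnd.length = w.length
  | _, _, .nil => rfl
  | _, _, .cons _ w => congrArg Nat.succ w.length_tensorSnd

def tensorZip : ∀ {a a' : V} {b b' : W} (w₁ : G.Walk a a') (w₂ : H.Walk b b'),
    w₁.length = w₂.length → (G ×ₜ H).Walk (a, b) (a', b')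
  | _, _, _, _, .nil, .nil, _ => .nil
  | _, _, _, _, .cons h₁ w₁, .cons h₂ w₂, h =>
    .cons ⟨h₁, h₂⟩ (tensorZip w₁ w₂ (by simpa using h))
  | _, _, _, _, .nil, .cons _ _, h => absurd h (by simp)
  | _, _, _, _, .cons _ _, .nil, h => absurd h (by simp)

theorem tensorFst_tensorZip : ∀ {a a' : V} {b b' : W} (w₁ : G.Walk a a') (w₂ : H.Walk b b')
    (h : w₁.length = w₂.length), (tensorZip w₁ w₂ h).tensorFst = w₁
  | _, _, _, _, .nil, .nil, _ => rfl
  | _, _, _, _, .cons _ w₁, .cons _ w₂, _ => congrArg (cons _) (tensorFst_tensorZip w₁ w₂ _)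
  | _, _, _, _, .nil, .cons _ _, h => absurd h (by simp)
  | _, _, _, _, .cons _ _, .nil, h => absurd h (by simp)

theorem tensorSnd_tensorZip : ∀ {a a' : V} {b b' : W} (w₁ : G.Walk a a') (w₂ : H.Walk b b')
    (h : w₁.length = w₂.length), (tensorZip w₁ w₂ h).tensorSnd = w₂
  | _, _, _, _, .nil, .nil, _ => rfl
  | _, _, _, _, .cons _ w₁, .cons _ w₂, _ => congrArg (cons _) (tensorSnd_tensorZip w₁ w₂ _)
  | _, _, _, _, .nil, .cons _ _, h => absurd h (by simp)
  | _, _, _, _, .cons _ _, .nil, h => absurd h (by simp)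

theorem tensorZip_tensorFst_tensorSnd : ∀ {p q : V × W} (w : (G ×ₜ H).Walk p q),
    tensorZip w.tensorFst w.tensorSnd (by simp) = w
  | _, _, .nil => rfl
  | _, _, .cons _ w => congrArg (cons _) (tensorZip_tensorFst_tensorSnd w)

end Walk

def tensorProd.walkLengthEquiv (a a' : V) (b b' : W) (n : ℕ) :
    {w : (G ×ₜ H).Walk (a, b) (a', b') // w.length = n} ≃
      {w : G.Walk a a' // w.length = n} × {w : H.Walk b b' // w.length = n} where
  toFun w := (⟨w.1.tensorFst, by simp [w.2]⟩, ⟨w.1.tensorSnd, by simp [w.2]⟩)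
  invFun w := ⟨w.1.1.tensorZip w.2.1 (w.1.2.trans w.2.2.symm), by
    rw [← Walk.length_tensorFst, Walk.tensorFst_tensorZip, w.1.2]⟩
  left_inv w := Subtype.ext (Walk.tensorZip_tensorFst_tensorSnd w.1)
  right_inv w :=
    Prod.ext (Subtype.ext (Walk.tensorFst_tensorZip ..)) (Subtype.ext (Walk.tensorSnd_tensorZip ..))

theorem walkCount_tensorProd (a : V) (b : W) (n : ℕ) :
    walkCount (G ×ₜ H) (a, b) n = walkCount G a n * walkCount H b n := by
  rw [walkCount, Nat.card_congr (tensorProd.walkLengthEquiv a a b b n), Nat.card_prod]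
  rfl

end TensorProduct

section Lift

variable {V V' : Type*} {G : SimpleGraph V} {G' : SimpleGraph V'} (f : G →g G')

theorem Walk.exists_map_eq_of_lift (hf : Function.Injective f)
    (hlift : ∀ v w', G'.Adj (f v) w' → ∃ w, G.Adj v w ∧ f w = w') {a b : V'} (w' : G'.Walk a b)
    (u v : V) (hu : f u = a) (hv : f v = b) :
    ∃ w : G.Walk u v, w.map f = w'.copy hu.symm hv.symm := by
  induction w' generalizing u with
  | nil =>
    obtain rfl := hf (hu.trans hv.symm)
    subst hu
    exact ⟨.nil, rfl⟩
  | cons h w' ih =>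
    subst hu hv
    obtain ⟨x, hux, rfl⟩ := hlift u _ h
    obtain ⟨w, hw⟩ := ih x rfl rfl
    exact ⟨.cons hux w, by simp [hw]⟩

noncomputable def Hom.walkLengthEquivOfLift (hf : Function.Injective f)
    (hlift : ∀ v w', G'.Adj (f v) w' → ∃ w, G.Adj v w ∧ f w = w') (u v : V) (n : ℕ) :
    {w : G.Walk u v // w.length = n} ≃ {w : G'.Walk (f u) (f v) // w.length = n} :=
  Equiv.ofBijective (fun w => ⟨w.1.map f, by simp [w.2]⟩) <| by
    refine ⟨fun w₁ w₂ h => Subtype.ext (Walk.map_injective_of_injective hf u v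
      (congrArg Subtype.val h)), fun w' => ?_⟩
    obtain ⟨w, hw⟩ := Walk.exists_map_eq_of_lift f hf hlift w'.1 u v rfl rfl
    exact ⟨⟨w, by rw [← Walk.length_map f, hw, Walk.copy_rfl_rfl, w'.2]⟩, Subtype.ext hw⟩

theorem walkCount_eq_of_lift (hf : Function.Injective f)
    (hlift : ∀ v w', G'.Adj (f v) w' → ∃ w, G.Adj v w ∧ f w = w') (u : V) (n : ℕ) :
    walkCount G u n = walkCount G' (f u) n :=
  Nat.card_congr (Hom.walkLengthEquivOfLift f hf hlift u u n)

end Lift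

section StepLabelling

variable {V S : Type*}

/-- `step v s` is the neighbour of `v` reached by the step labelled `s`, or `none` if that step is
not allowed at `v`. -/
structure IsStepLabelling (G : SimpleGraph V) (step : V → S → Option V) : Prop where
  adj_iff {v w : V} : G.Adj v w ↔ ∃ s, step v s = some w
  unique {v w : V} {s t : S} : step v s = some w → step v t = some w → s = t

variable {G : SimpleGraph V} {step : V → S → Option V} (hstep : G.IsStepLabelling step)

namespace Walk

noncomputable def steps : ∀ {u v : V}, G.Walk u v → List S
  | _, _, .nil => []
  | _, _, .cons h w => (hstep.adj_iff.1 h).choose :: w.steps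

theorem length_steps : ∀ {u v : V} (w : G.Walk u v), (w.steps hstep).length = w.length
  | _, _, .nil => rfl
  | _, _, .cons _ w => congrArg Nat.succ w.length_steps

theorem foldlM_steps : ∀ {u v : V} (w : G.Walk u v), (w.steps hstep).foldlM step u = some v
  | _, _, .nil => rfl
  | _, _, .cons h w => by simp [steps, (hstep.adj_iff.1 h).choose_spec, w.foldlM_steps]

theorem steps_injective {u v : V} (w₁ w₂ : G.Walk u v) (h : w₁.steps hstep = w₂.steps hstep) :
    w₁ = w₂ := by
  induction w₁ with
  | nil => cases w₂ with
    | nil => rfl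
    | cons => simp [steps] at h
  | cons h₁ w₁ ih => cases w₂ with
    | nil => simp [steps] at h
    | cons h₂ w₂ =>
      simp only [steps, List.cons.injEq] at h
      obtain ⟨hs, hw⟩ := h
      have hx := (hstep.adj_iff.1 h₁).choose_spec
      rw [hs, (hstep.adj_iff.1 h₂).choose_spec, Option.some_inj] at hx
      subst hx
      rw [ih w₂ hw]

theorem exists_steps_eq (l : List S) {u v : V} (hl : l.foldlM step u = some v) :
    ∃ w : G.Walk u v, w.steps hstep = l := by
  induction l generalizing u with
  | nil =>
    obtain rfl : u = v := Option.some_inj.1 hl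
    exact ⟨.nil, rfl⟩
  | cons s l ih =>
    obtain ⟨x, hx, hl⟩ := Option.bind_eq_some_iff.1 hl
    have hadj := hstep.adj_iff.2 ⟨s, hx⟩
    obtain ⟨w, rfl⟩ := ih hl
    exact ⟨.cons hadj w, by simp [steps, hstep.unique (hstep.adj_iff.1 hadj).choose_spec hx]⟩

end Walk

noncomputable def walkLengthEquivSteps (hstep : G.IsStepLabelling step) (u v : V) (n : ℕ) :
    {w : G.Walk u v // w.length = n} ≃
      {l : List S // l.length = n ∧ l.foldlM step u = some v} :=
  Equiv.ofBijective
    (fun w => ⟨w.1.steps hstep, by rw [w.1.length_steps, w.2], w.1.foldlM_steps hstep⟩)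
    ⟨fun w₁ w₂ h => Subtype.ext (Walk.steps_injective hstep _ _ (congrArg Subtype.val h)),
      fun l => by
        obtain ⟨w, hw⟩ := Walk.exists_steps_eq hstep l.1 l.2.2
        exact ⟨⟨w, by rw [← w.length_steps hstep, hw, l.2.1]⟩, Subtype.ext hw⟩⟩

theorem walkCount_eq_card_steps (hstep : G.IsStepLabelling step) (u : V) (n : ℕ) :
    walkCount G u n = Nat.card {l : List S // l.length = n ∧ l.foldlM step u = some u} :=
  Nat.card_congr (walkLengthEquivSteps hstep u u n)

end StepLabelling

end SimpleGraph

section BoolLists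

open Finset

theorem List.count_true_ofFn {n : ℕ} (f : Fin n → Bool) :
    (List.ofFn f).count true = #{i | f i = true} := by
  rw [List.ofFn_eq_map, List.count, List.countP_map, card_filter, Fin.sum_univ_def,
    List.countP_eq_length_filter]
  simp [List.sum_map_ite, Function.comp_def]

theorem List.ofFn_getD_eq_self {α : Type*} {n : ℕ} {l : List α} (hl : l.length = n) (d : α) :
    List.ofFn (fun i : Fin n => l.getD i d) = l :=
  List.ext_getElem (by simp [hl]) fun i _ hi => by simp [List.getElem?_eq_getElem hi]

def boolListCountTrueEquiv (n k : ℕ) :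
    {l : List Bool // l.length = n ∧ l.count true = k} ≃ {s : Finset (Fin n) // #s = k} where
  toFun l := ⟨univ.filter (fun i : Fin n => l.1.getD i false), by
    rw [← List.count_true_ofFn, List.ofFn_getD_eq_self l.2.1, l.2.2]⟩
  invFun s := ⟨List.ofFn (· ∈ s.1), by simp, by rw [List.count_true_ofFn]; simpa using s.2⟩
  left_inv l := Subtype.ext (by simpa using List.ofFn_getD_eq_self l.2.1 false)
  right_inv s := Subtype.ext (by ext i; simp)

theorem card_boolList_count_true (n k : ℕ) :
    Nat.card {l : List Bool // l.length = n ∧ l.count true = k} = n.choose k := by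
  rw [Nat.card_congr (boolListCountTrueEquiv n k), Nat.card_eq_fintype_card,
    Fintype.card_finset_len, Fintype.card_fin]

end BoolLists

section IntegerLine

theorem latZ_adj_iff {v w : ℤ} : latZ.Adj v w ↔ w = v + 1 ∨ w = v - 1 := by
  change |v - w| = 1 ↔ _
  rw [abs_eq zero_le_one]
  omega

def latZStep (v : ℤ) (b : Bool) : Option ℤ := some (if b then v + 1 else v - 1)

theorem isStepLabelling_latZStep : latZ.IsStepLabelling latZStep where
  adj_iff {v w} := by
    rw [latZ_adj_iff]
    constructor
    · rintro (rfl | rfl)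
      exacts [⟨true, rfl⟩, ⟨false, rfl⟩]
    · rintro ⟨_ | _, h⟩ <;> simp_all [latZStep]
  unique {v w s t} := by
    cases s <;> cases t <;> simp [latZStep] <;> omega

theorem foldlM_latZStep (l : List Bool) (v : ℤ) :
    l.foldlM latZStep v = some (v + l.count true - l.count false) := by
  induction l generalizing v with
  | nil => simp
  | cons b l ih => cases b <;> simp [latZStep, ih] <;> ring

theorem walkCount_latZ (v : ℤ) (n : ℕ) :
    walkCount latZ v n = Nat.card {l : List Bool // l.length = n ∧ 2 * l.count true = n} := by
  rw [SimpleGraph.walkCount_eq_card_steps isStepLabelling_latZStep]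
  refine Nat.card_congr (Equiv.subtypeEquivRight fun l => ?_)
  rw [foldlM_latZStep, Option.some_inj, ← l.count_true_add_count_false]
  omega

theorem walkCount_latZ_two_mul (v : ℤ) (m : ℕ) :
    walkCount latZ v (2 * m) = (2 * m).choose m := by
  rw [walkCount_latZ, ← card_boolList_count_true]
  exact Nat.card_congr (Equiv.subtypeEquivRight fun l => by omega)

theorem walkCount_latZ_two_mul_add_one (v : ℤ) (m : ℕ) : walkCount latZ v (2 * m + 1) = 0 := by
  rw [walkCount_latZ]
  have : IsEmpty {l : List Bool // l.length = 2 * m + 1 ∧ 2 * l.count true = 2 * m + 1} :=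
    ⟨fun l => by omega⟩
  exact Nat.card_of_isEmpty

end IntegerLine

section HalfLine

open DyckStep

theorem latN_adj_iff {v w : ℕ} : latN.Adj v w ↔ w = v + 1 ∨ w + 1 = v := by
  change |(v : ℤ) - w| = 1 ↔ _
  rw [abs_eq zero_le_one]
  omega

def latNStep : ℕ → DyckStep → Option ℕ
  | v, U => some (v + 1)
  | v, D => v.ppred

theorem isStepLabelling_latNStep : latN.IsStepLabelling latNStep where
  adj_iff {v w} := by
    rw [latN_adj_iff]
    constructor
    · rintro (rfl | rfl)
      exacts [⟨U, rfl⟩, ⟨D, rfl⟩]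
    · rintro ⟨_ | _, h⟩ <;> simp_all [latNStep, Nat.ppred_eq_some]
  unique {v w s t} := by
    cases s <;> cases t <;> simp [latNStep, Nat.ppred_eq_some] <;> omega

theorem foldlM_latNStep_eq_some_iff (l : List DyckStep) (u w : ℕ) :
    l.foldlM latNStep u = some w ↔
      (∀ i, (l.take i).count D ≤ u + (l.take i).count U) ∧ w + l.count D = u + l.count U := by
  induction l generalizing u with
  | nil => simp [eq_comm]
  | cons s l ih =>
    have forall_iff (P : ℕ → Prop) : (∀ i, P i) ↔ P 0 ∧ ∀ i, P (i + 1) :=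
      ⟨fun h => ⟨h 0, fun i => h _⟩, fun h i => by cases i; exacts [h.1, h.2 _]⟩
    rw [forall_iff]
    cases s
    · simp [latNStep, ih]
      refine and_congr (forall_congr' fun i => ?_) ?_ <;> omega
    · cases u
      · simpa [latNStep] using fun h => absurd (h 0) (by simp)
      · simp [latNStep, ih]
        refine and_congr (forall_congr' fun i => ?_) ?_ <;> omega

def dyckWordEquivClosedLatNSteps (m : ℕ) :
    {p : DyckWord // p.semilength = m} ≃
      {l : List DyckStep // l.length = 2 * m ∧ l.foldlM latNStep 0 = some 0} where
  toFun p := ⟨p.1.toList, by rw [← p.1.two_mul_semilength_eq_length, p.2],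
    (foldlM_latNStep_eq_some_iff _ 0 0).2
      ⟨by simpa using p.1.count_D_le_count_U, by simpa using p.1.count_U_eq_count_D.symm⟩⟩
  invFun l :=
    have hl := (foldlM_latNStep_eq_some_iff _ 0 0).1 l.2.2
    let p : DyckWord := ⟨l.1, by simpa using hl.2.symm, by simpa using hl.1⟩
    ⟨p, Nat.eq_of_mul_eq_mul_left two_pos (p.two_mul_semilength_eq_length.trans l.2.1)⟩
  left_inv _ := rfl
  right_inv _ := rfl

theorem walkCount_latN_two_mul (m : ℕ) : walkCount latN 0 (2 * m) = catalan m := by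
  rw [SimpleGraph.walkCount_eq_card_steps isStepLabelling_latNStep,
    ← Nat.card_congr (dyckWordEquivClosedLatNSteps m), Nat.card_eq_fintype_card,
    DyckWord.card_dyckWord_semilength_eq_catalan]

end HalfLine

section HalfPlane

open SimpleGraph

theorem halfPlane_adj_iff {p q : {p : ℤ × ℤ | p.2 ≤ p.1}} :
    ((latZ □ latZ).induce {p : ℤ × ℤ | p.2 ≤ p.1}).Adj p q ↔
      (q.1.1 = p.1.1 + 1 ∨ q.1.1 = p.1.1 - 1) ∧ q.1.2 = p.1.2 ∨
        (q.1.2 = p.1.2 + 1 ∨ q.1.2 = p.1.2 - 1) ∧ q.1.1 = p.1.1 := by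
  rw [induce_adj, boxProd_adj, latZ_adj_iff, latZ_adj_iff]
  omega

/-- The image is `{(u, v) | u ≡ v [ZMOD 2]}`, only one of the two components of `latN ×ₜ latZ`,
so this is not an isomorphism; but edges lift along it, which is all walks need. -/
def rotateHalfPlane : (latZ □ latZ).induce {p : ℤ × ℤ | p.2 ≤ p.1} →g latN ×ₜ latZ where
  toFun p := ((p.1.1 - p.1.2).toNat, p.1.1 + p.1.2)
  map_rel' {p q} h := by
    have hp : p.1.2 ≤ p.1.1 := p.2
    have hq : q.1.2 ≤ q.1.1 := q.2
    rw [halfPlane_adj_iff] at h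
    rw [tensorProd_adj, latN_adj_iff, latZ_adj_iff]
    omega

theorem rotateHalfPlane_apply (p : {p : ℤ × ℤ | p.2 ≤ p.1}) :
    rotateHalfPlane p = ((p.1.1 - p.1.2).toNat, p.1.1 + p.1.2) := rfl

theorem rotateHalfPlane_injective : Function.Injective rotateHalfPlane := by
  intro p q h
  have hp : p.1.2 ≤ p.1.1 := p.2
  have hq : q.1.2 ≤ q.1.1 := q.2
  simp only [rotateHalfPlane_apply, Prod.ext_iff] at h
  exact Subtype.ext (Prod.ext (by omega) (by omega))

theorem rotateHalfPlane_lift (p : {p : ℤ × ℤ | p.2 ≤ p.1}) (w : ℕ × ℤ)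
    (h : (latN ×ₜ latZ).Adj (rotateHalfPlane p) w) :
    ∃ q, ((latZ □ latZ).induce {p : ℤ × ℤ | p.2 ≤ p.1}).Adj p q ∧ rotateHalfPlane q = w := by
  have hp : p.1.2 ≤ p.1.1 := p.2
  simp only [rotateHalfPlane_apply, tensorProd_adj, latN_adj_iff, latZ_adj_iff] at h
  -- `(u, v) ↦ ((u + v) / 2, (v - u) / 2)` inverts the rotation; `u + v` is even here.
  refine ⟨⟨(((w.1 : ℤ) + w.2) / 2, (w.2 - w.1) / 2), by simp only [Set.mem_ofPred_eq]; omega⟩,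
    ?_, ?_⟩
  · rw [halfPlane_adj_iff]
    dsimp only
    omega
  · simp only [rotateHalfPlane_apply, Prod.ext_iff]
    omega

theorem walkCount_halfPlane (n : ℕ) :
    walkCount ((latZ □ latZ).induce {p : ℤ × ℤ | p.2 ≤ p.1}) ⟨(0, 0), by simp⟩ n =
      walkCount latN 0 n * walkCount latZ 0 n := by
  rw [walkCount_eq_of_lift rotateHalfPlane rotateHalfPlane_injective rotateHalfPlane_lift]
  exact walkCount_tensorProd 0 0 n

end HalfPlane

theorem walkCount_xgey (m : ℕ) :
    walkCount ((latZ □ latZ).induce {p : ℤ × ℤ | p.2 ≤ p.1}) ⟨(0, 0), by simp⟩ (2 * m)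
        = catalan m * Nat.choose (2 * m) m ∧
      walkCount ((latZ □ latZ).induce {p : ℤ × ℤ | p.2 ≤ p.1}) ⟨(0, 0), by simp⟩ (2 * m + 1)
        = 0 := by
  rw [walkCount_halfPlane, walkCount_halfPlane, walkCount_latN_two_mul, walkCount_latZ_two_mul,
    walkCount_latZ_two_mul_add_one, mul_zero]
  exact ⟨rfl, rfl⟩
end

section
/- For all natural numbers m, the identity ∑_{k=0}^{m} C(2m, 2k) · C(2k, k) · C(2m-2k, m-k) = C(2m, m)² holds. -/
/-!
Both `C(a+b+c+d, a+b) C(a+b, a) C(c+d, c)` and `C(a+b+c+d, a+c) C(a+c, a) C(b+d, b)` equal the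
multinomial coefficient `(a+b+c+d)! / (a! b! c! d!)`. With `a = b = k` and `c = d = m - k` this
turns the `k`-th summand into `C(2m, m) C(m, k)²`, and Vandermonde's `∑ C(m, k)² = C(2m, m)`
finishes the proof.
-/

namespace Nat

theorem add_choose_left_mul_factorial_mul_factorial (i j : ℕ) :
    (i + j).choose i * i ! * j ! = (i + j)! := by
  simpa using choose_mul_factorial_mul_factorial (le_add_right i j)

theorem add_choose_mul_choose_mul_choose_mul_factorials (a b c d : ℕ) :
    (a + b + (c + d)).choose (a + b) * (a + b).choose a * (c + d).choose c
        * (a ! * b ! * c ! * d !) = (a + b + (c + d))! := by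
  calc _ = (a + b + (c + d)).choose (a + b)
          * ((a + b).choose a * a ! * b !) * ((c + d).choose c * c ! * d !) := by ring
    _ = _ := by
      rw [add_choose_left_mul_factorial_mul_factorial, add_choose_left_mul_factorial_mul_factorial,
        add_choose_left_mul_factorial_mul_factorial]

theorem add_choose_mul_choose_mul_choose_comm (a b c d : ℕ) :
    (a + b + (c + d)).choose (a + b) * (a + b).choose a * (c + d).choose c
      = (a + c + (b + d)).choose (a + c) * (a + c).choose a * (b + d).choose b := by
  refine Nat.eq_of_mul_eq_mul_right (by positivity : 0 < a ! * b ! * c ! * d !) ?_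
  rw [add_choose_mul_choose_mul_choose_mul_factorials, mul_right_comm (a !) (b !) (c !),
    add_choose_mul_choose_mul_choose_mul_factorials, add_add_add_comm]

end Nat

theorem binom_identity (m : ℕ) :
    ∑ k ∈ Finset.range (m + 1),
        Nat.choose (2 * m) (2 * k) * Nat.choose (2 * k) k * Nat.choose (2 * m - 2 * k) (m - k)
      = Nat.choose (2 * m) m ^ 2 := by
  have summand : ∀ k ∈ Finset.range (m + 1),
      (2 * m).choose (2 * k) * (2 * k).choose k * (2 * m - 2 * k).choose (m - k)
        = (2 * m).choose m * m.choose k ^ 2 := by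
    intro k hk
    obtain ⟨l, rfl⟩ := Nat.exists_eq_add_of_le (Finset.mem_range_succ_iff.mp hk)
    calc _ = (k + k + (l + l)).choose (k + k) * (k + k).choose k * (l + l).choose l := by
          rw [show 2 * (k + l) - 2 * k = l + l by omega, Nat.add_sub_cancel_left, two_mul k,
            show 2 * (k + l) = k + k + (l + l) by ring]
      _ = (k + l + (k + l)).choose (k + l) * (k + l).choose k * (k + l).choose k :=
          Nat.add_choose_mul_choose_mul_choose_comm k k l l
      _ = _ := by rw [← two_mul, sq, mul_assoc]
  rw [Finset.sum_congr rfl summand, ← Finset.mul_sum, Nat.sum_range_choose_sq, sq]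
end

section
/- For the path graph P₄ on 4 vertices {0,1,2,3}, the number of 2m-step closed walks at vertex 0 equals ((5-√5)/10)·((3+√5)/2)^m + ((5+√5)/10)·((3-√5)/2)^m, and the number of odd-step closed walks at 0 is 0. -/
open Real

/-- The path graph `P₄` on vertices `{0,1,2,3}` with edges `{0,1},{1,2},{2,3}`. -/
def P4 : SimpleGraph (Fin 4) where
  Adj i j := |(i.val : ℤ) - j.val| = 1
  symm := ⟨by intro i j h; rwa [abs_sub_comm]⟩
  loopless := ⟨by intro i h; simp at h⟩

/-!
`P₄` is bipartite, so it has no closed walks of odd length. Its characteristic polynomial is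
`X⁴ - 3X² + 1`, so by Cayley–Hamilton the even walk counts `u m = (A^(2m))₀₀` satisfy
`u (m + 2) = 3 u (m + 1) - u m` with `u 0 = u 1 = 1`; the roots of `X² - 3X + 1` are
`(3 ± √5)/2`, and the coefficients are fixed by the two initial values.
-/

theorem eq_mul_pow_add_mul_pow_of_recurrence {R : Type*} [CommRing R] {u : ℕ → R}
    {p q r s a b : R} (hr : r ^ 2 = p * r - q) (hs : s ^ 2 = p * s - q)
    (hu : ∀ n, u (n + 2) = p * u (n + 1) - q * u n)
    (h0 : u 0 = a + b) (h1 : u 1 = a * r + b * s) (n : ℕ) :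
    u n = a * r ^ n + b * s ^ n := by
  induction n using Nat.twoStepInduction with
  | zero => simpa using h0
  | one => simpa using h1
  | more n ih₀ ih₁ =>
    rw [hu, ih₀, ih₁]
    linear_combination -a * r ^ n * hr - b * s ^ n * hs

namespace SimpleGraph

variable {V : Type*} (G : SimpleGraph V)

theorem walkCount_eq_zero_of_colorable_two (hG : G.Colorable 2) (o : V) {m : ℕ} (hm : Odd m) :
    walkCount G o m = 0 := by
  have : IsEmpty {w : G.Walk o o // w.length = m} :=
    ⟨fun ⟨w, hw⟩ ↦ Nat.not_even_iff_odd.2 hm (hw ▸ two_colorable_iff_forall_loop_even.1 hG o w)⟩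
  simp [walkCount]

theorem cast_walkCount_eq_adjMatrix_pow_apply [Fintype V] [DecidableEq V] [DecidableRel G.Adj]
    {α : Type*} [Semiring α] (o : V) (m : ℕ) :
    (walkCount G o m : α) = (G.adjMatrix α ^ m) o o := by
  rw [adjMatrix_pow_apply_eq_card_walk, walkCount, Nat.card_eq_fintype_card]
  rfl

end SimpleGraph

instance : DecidableRel P4.Adj := fun i j ↦
  inferInstanceAs (Decidable (|(i.val : ℤ) - j.val| = 1))

theorem P4_colorable_two : P4.Colorable 2 :=
  ⟨SimpleGraph.Coloring.mk (fun i ↦ (⟨i.val % 2, Nat.mod_lt _ two_pos⟩ : Fin 2)) (by decide)⟩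

theorem P4_adjMatrix (R : Type*) [NonAssocSemiring R] :
    P4.adjMatrix R = !![0, 1, 0, 0; 1, 0, 1, 0; 0, 1, 0, 1; 0, 0, 1, 0] := by
  ext i j
  rw [SimpleGraph.adjMatrix_apply]
  fin_cases i <;> fin_cases j <;> simp [P4]

theorem P4_adjMatrix_pow_four (R : Type*) [Ring R] :
    P4.adjMatrix R ^ 4 = (3 : R) • P4.adjMatrix R ^ 2 - 1 := by
  rw [P4_adjMatrix]
  ext i j
  fin_cases i <;> fin_cases j <;> simp [pow_succ, Matrix.mul_apply, Fin.sum_univ_four] <;> norm_num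

theorem P4_walkCount_even_recurrence (m : ℕ) :
    (walkCount P4 0 (2 * (m + 2)) : ℝ)
      = 3 * walkCount P4 0 (2 * (m + 1)) - walkCount P4 0 (2 * m) := by
  simp only [SimpleGraph.cast_walkCount_eq_adjMatrix_pow_apply]
  rw [show 2 * (m + 2) = 2 * m + 4 by ring, show 2 * (m + 1) = 2 * m + 2 by ring, pow_add,
    pow_add, P4_adjMatrix_pow_four, mul_sub, mul_one, Matrix.mul_smul, Matrix.sub_apply,
    Matrix.smul_apply, smul_eq_mul]

theorem walkCount_P4 (m : ℕ) :
    (walkCount P4 0 (2 * m) : ℝ)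
        = (5 - Real.sqrt 5) / 10 * ((3 + Real.sqrt 5) / 2) ^ m
          + (5 + Real.sqrt 5) / 10 * ((3 - Real.sqrt 5) / 2) ^ m ∧
      walkCount P4 0 (2 * m + 1) = 0 := by
  refine ⟨?_, P4.walkCount_eq_zero_of_colorable_two P4_colorable_two 0 (odd_two_mul_add_one m)⟩
  have h5 : √5 ^ 2 = 5 := Real.sq_sqrt (by norm_num)
  have h_zero : (walkCount P4 0 (2 * 0) : ℝ) = 1 := by
    simp [SimpleGraph.cast_walkCount_eq_adjMatrix_pow_apply]
  have h_one : (walkCount P4 0 (2 * 1) : ℝ) = 1 := by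
    simp [SimpleGraph.cast_walkCount_eq_adjMatrix_pow_apply, P4_adjMatrix, sq, Matrix.mul_apply,
      Fin.sum_univ_four]
  refine eq_mul_pow_add_mul_pow_of_recurrence (u := fun k ↦ (walkCount P4 0 (2 * k) : ℝ))
    (p := 3) (q := 1) ?_ ?_ (by simpa only [one_mul] using P4_walkCount_even_recurrence) ?_ ?_ m
  · linear_combination h5 / 4
  · linear_combination h5 / 4
  · rw [h_zero]; ring
  · rw [h_one]; linear_combination h5 / 10
end
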